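/- arXiv:2201.12850 — 8 statements merged into one kernel-verified Lean document; each statement's English description precedes it below -/
import Mathlib

section
/- If G is a stepwise transmission irregular (STI) graph of order n and size m (number of edges), then m ≤ (n² − 1)/4. -/
open Finset

variable {V : Type*}

/-- The transmission of a vertex `v`: the sum of distances from `v` to all vertices. -/
noncomputable def transmission [Fintype V] (G : SimpleGraph V) (v : V) : ℕ :=
  ∑ u, G.dist v u

/-- A connected graph is stepwise transmission irregular (STI) if the transmissions of
the endpoints of every edge differ by exactly one. -/
def IsSTI [Fintype V] (G : SimpleGraph V) : Prop :=
  G.Connected ∧ ∀ u v : V, G.Adj u v →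
    ((transmission G u : ℤ) - (transmission G v : ℤ)).natAbs = 1

/-!
Transmission parity flips along every edge of an STI graph, so it properly 2-colours `G`, and
since `G` is connected, `d(u, v) ≡ Tr u + Tr v (mod 2)`. Summing over `u` gives
`Tr v ≡ n · Tr v + ∑ Tr (mod 2)`; comparing this at the two ends of an edge forces `n` to be odd.
So the colour classes have sizes `a + b = n` with `a ≠ b`, and `m ≤ a b ≤ (n² - 1) / 4`.
-/

open SimpleGraph

section ZModTwoLabelling

variable {G : SimpleGraph V} {f : V → ZMod 2}

theorem SimpleGraph.Walk.length_cast_zmod_two (hf : ∀ u v, G.Adj u v → f v = f u + 1)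
    {u v : V} (p : G.Walk u v) : (p.length : ZMod 2) = f u + f v := by
  induction p with
  | nil => simp [CharTwo.add_self_eq_zero]
  | @cons u w v huw p ih =>
    rw [Walk.length_cons, Nat.cast_succ, ih, hf u w huw]
    grind

theorem SimpleGraph.Connected.dist_cast_zmod_two (hG : G.Connected)
    (hf : ∀ u v, G.Adj u v → f v = f u + 1) (u v : V) :
    (G.dist u v : ZMod 2) = f u + f v := by
  obtain ⟨p, hp⟩ := hG.exists_walk_length_eq_dist u v
  rw [← hp, p.length_cast_zmod_two hf]

theorem disjoint_setOf_eq_zero_setOf_eq_one (f : V → ZMod 2) :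
    Disjoint {v | f v = 0} {v | f v = 1} :=
  Set.disjoint_left.2 fun _ h0 h1 => zero_ne_one (h0.symm.trans h1)

theorem SimpleGraph.isBipartiteWith_of_zmod_two (hf : ∀ u v, G.Adj u v → f v = f u + 1) :
    G.IsBipartiteWith {v | f v = 0} {v | f v = 1} where
  disjoint := disjoint_setOf_eq_zero_setOf_eq_one f
  mem_of_adj u v huv := by
    simp only [Set.mem_ofPred_eq, hf u v huv]
    generalize f u = a
    decide +revert

theorem ncard_setOf_eq_zero_add_ncard_setOf_eq_one [Finite V] (f : V → ZMod 2) :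
    {v | f v = 0}.ncard + {v | f v = 1}.ncard = Nat.card V := by
  rw [← Set.ncard_union_eq (disjoint_setOf_eq_zero_setOf_eq_one f), ← Set.ncard_univ]
  congr 1
  ext v
  simp only [Set.mem_union, Set.mem_ofPred_eq, Set.mem_univ, iff_true]
  generalize f v = a
  decide +revert

end ZModTwoLabelling

theorem SimpleGraph.IsBipartiteWith.ncard_edgeSet_le [Finite V] {G : SimpleGraph V}
    {s t : Set V} (h : G.IsBipartiteWith s t) : G.edgeSet.ncard ≤ s.ncard * t.ncard := by
  have := h.encard_edgeSet_le
  rw [← G.edgeSet.toFinite.cast_ncard_eq, ← s.toFinite.cast_ncard_eq,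
    ← t.toFinite.cast_ncard_eq] at this
  exact_mod_cast this

theorem four_mul_le_sq_add_sub_one_of_odd {a b : ℕ} (h : Odd (a + b)) :
    4 * (a * b) ≤ (a + b) ^ 2 - 1 := by
  have hne : (a : ℤ) - b ≠ 0 := by
    intro hab
    obtain rfl : a = b := by omega
    grind
  have : 0 < ((a : ℤ) - b) ^ 2 := by positivity
  have : 4 * (a * b) + 1 ≤ (a + b) ^ 2 := by
    zify
    nlinarith
  omega

namespace IsSTI

variable [Fintype V] {G : SimpleGraph V}

theorem transmission_cast_of_adj (hG : IsSTI G) {u v : V} (huv : G.Adj u v) :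
    (transmission G v : ZMod 2) = transmission G u + 1 := by
  have h := hG.2 u v huv
  have : (transmission G u : ℤ) - transmission G v = 1 ∨
      (transmission G u : ℤ) - transmission G v = -1 := by omega
  rcases this with h' | h' <;>
  · have := congrArg (Int.cast : ℤ → ZMod 2) h'
    push_cast at this
    grind

theorem transmission_cast_eq (hG : IsSTI G) (v : V) :
    (transmission G v : ZMod 2) =
      Fintype.card V * transmission G v + ∑ u, (transmission G u : ZMod 2) := by
  conv_lhs => rw [transmission, Nat.cast_sum]
  simp only [hG.1.dist_cast_zmod_two (fun _ _ => hG.transmission_cast_of_adj)]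
  rw [Finset.sum_add_distrib, Finset.sum_const, Finset.card_univ, nsmul_eq_mul]

theorem odd_card (hG : IsSTI G) {u v : V} (huv : G.Adj u v) : Odd (Fintype.card V) := by
  rw [← ZMod.natCast_eq_one_iff_odd]
  linear_combination (hG.transmission_cast_eq u) - hG.transmission_cast_eq v
    - (Fintype.card V - 1 : ZMod 2) * hG.transmission_cast_of_adj huv

end IsSTI

theorem sti_size_upper_bound [Fintype V] (G : SimpleGraph V) (hSTI : IsSTI G) :
    4 * G.edgeSet.ncard ≤ Fintype.card V ^ 2 - 1 := by
  obtain rfl | hG := eq_or_ne G ⊥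
  · simp
  obtain ⟨u, v, huv⟩ := ne_bot_iff_exists_adj.1 hG
  set parity : V → ZMod 2 := fun v => transmission G v
  have hbip : G.IsBipartiteWith {v | parity v = 0} {v | parity v = 1} :=
    isBipartiteWith_of_zmod_two fun _ _ => hSTI.transmission_cast_of_adj
  have hcard := ncard_setOf_eq_zero_add_ncard_setOf_eq_one parity
  rw [Nat.card_eq_fintype_card] at hcard
  calc 4 * G.edgeSet.ncard ≤ 4 * ({v | parity v = 0}.ncard * {v | parity v = 1}.ncard) := by
        gcongr
        exact hbip.ncard_edgeSet_le
    _ ≤ _ := four_mul_le_sq_add_sub_one_of_odd (hcard ▸ hSTI.odd_card huv)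
    _ = _ := by rw [hcard]
end

section
/- Let G be a stepwise transmission irregular (STI) graph of order n and size m. Then m = (n² − 1)/4 if and only if G is isomorphic to the complete bipartite graph K_{(n−1)/2, (n+1)/2}. -/
/-!
Adjacent vertices of an STI graph have transmissions of different parity, so the vertices of even
transmission and those of odd transmission split `G` into a bipartite graph with parts of sizes
`a + b = n`. Hence `m ≤ ab`, and `(a - b)² = n² - 4ab ≤ n² - 4m`. If `4m = n² - 1`, then
`(a - b)²` is odd and at most `1`, so `|a - b| = 1` and `m = ab`: `G` has every edge between its
parts, i.e. `G = K_{a,b}`.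
-/

open Finset

variable {V : Type*}

namespace SimpleGraph

variable {W₁ W₂ : Type*} {G : SimpleGraph V} {s t : Set V}

theorem Iso.ncard_edgeSet_eq {V' : Type*} {G' : SimpleGraph V'} (φ : G ≃g G') :
    G.edgeSet.ncard = G'.edgeSet.ncard := by
  simpa only [Nat.card_coe_set_eq] using Nat.card_congr φ.mapEdgeSet

theorem ncard_edgeSet_completeBipartiteGraph [Finite W₁] [Finite W₂] :
    (completeBipartiteGraph W₁ W₂).edgeSet.ncard = Nat.card W₁ * Nat.card W₂ := by
  rw [Set.ncard_def, encard_edgeSet_completeBipartiteGraph, ENat.card_eq_coe_natCard,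
    ENat.card_eq_coe_natCard, ← ENat.natCast_mul, ENat.toNat_natCast]

theorem IsBipartiteWith.ncard_edgeSet_le_s4 [Finite V] (h : G.IsBipartiteWith s t) :
    G.edgeSet.ncard ≤ s.ncard * t.ncard := by
  have := h.encard_edgeSet_le
  rw [← G.edgeSet.toFinite.cast_ncard_eq, ← s.toFinite.cast_ncard_eq,
    ← t.toFinite.cast_ncard_eq] at this
  exact_mod_cast this

theorem IsBipartiteWith.le_top_between (h : G.IsBipartiteWith s t) :
    G ≤ (⊤ : SimpleGraph V).between s t :=
  fun _ _ hadj ↦ ⟨hadj.ne, h.mem_of_adj hadj⟩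

open Classical in
noncomputable def completeBipartiteGraphIsoBetweenCompl (s : Set V) :
    completeBipartiteGraph s ↥sᶜ ≃g (⊤ : SimpleGraph V).between s sᶜ where
  toEquiv := Equiv.Set.sumCompl s
  map_rel_iff' := by
    rintro (⟨a, ha⟩ | ⟨a, ha⟩) (⟨b, hb⟩ | ⟨b, hb⟩) <;>
      simp [between_adj] <;> grind

theorem IsBipartiteWith.nonempty_iso_completeBipartiteGraph [Finite V] {a b : ℕ}
    (h : G.IsBipartiteWith s sᶜ) (hs : s.ncard = a) (hsc : sᶜ.ncard = b)
    (hm : s.ncard * sᶜ.ncard ≤ G.edgeSet.ncard) :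
    Nonempty (G ≃g completeBipartiteGraph (Fin a) (Fin b)) := by
  have hG : G = (⊤ : SimpleGraph V).between s sᶜ := by
    refine edgeSet_injective <| Set.eq_of_subset_of_ncard_le
      (edgeSet_subset_edgeSet.mpr h.le_top_between) ?_
    rw [(completeBipartiteGraphIsoBetweenCompl s).symm.ncard_edgeSet_eq,
      ncard_edgeSet_completeBipartiteGraph, Nat.card_coe_set_eq, Nat.card_coe_set_eq]
    exact hm
  subst hG
  exact ⟨(completeBipartiteGraphIsoBetweenCompl s).symm.trans <| completeBipartiteGraphCongr
    (Finite.equivFinOfCardEq (by rw [Nat.card_coe_set_eq, hs]))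
    (Finite.equivFinOfCardEq (by rw [Nat.card_coe_set_eq, hsc]))⟩

end SimpleGraph

theorem IsSTI.isBipartiteWith_even_transmission [Fintype V] {G : SimpleGraph V} (h : IsSTI G) :
    G.IsBipartiteWith {v | Even (transmission G v)} {v | Even (transmission G v)}ᶜ where
  disjoint := disjoint_compl_right
  mem_of_adj u v huv := by
    have := Int.natAbs_eq_iff.mp (h.2 u v huv)
    simp only [Set.mem_ofPred_eq, Set.mem_compl_iff, Nat.even_iff]
    omega

theorem mul_eq_and_succ_of_four_mul_add_one_eq_sq {a b m : ℕ} (hm : m ≤ a * b)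
    (h : 4 * m + 1 = (a + b) ^ 2) : m = a * b ∧ (b = a + 1 ∨ a = b + 1) := by
  have key : ((a : ℤ) - b) ^ 2 = 4 * ((m : ℤ) - a * b) + 1 := by
    linear_combination (-1 : ℤ) * (by exact_mod_cast h : (4 * m + 1 : ℤ) = (a + b) ^ 2)
  have hm' : (m : ℤ) ≤ a * b := by exact_mod_cast hm
  have hsq := sq_nonneg ((a : ℤ) - b)
  have hab : (m : ℤ) = a * b := by
    generalize ((a : ℤ) - b) ^ 2 = d at key hsq
    generalize (a : ℤ) * b = p at key hm' ⊢
    omega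
  refine ⟨by exact_mod_cast hab, ?_⟩
  rw [hab, sub_self, mul_zero, zero_add, sq_eq_one_iff] at key
  omega

theorem four_mul_pred_div_two_mul_succ_div_two {n : ℕ} (h : n = (n - 1) / 2 + (n + 1) / 2) :
    4 * ((n - 1) / 2 * ((n + 1) / 2)) = n ^ 2 - 1 := by
  obtain ⟨k, rfl | rfl⟩ : ∃ k, n = 0 ∨ n = 2 * k + 1 := ⟨(n - 1) / 2, by omega⟩
  · rfl
  · rw [show (2 * k + 1 - 1) / 2 = k by omega, show (2 * k + 1 + 1) / 2 = k + 1 by omega]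
    ring_nf
    omega

theorem sti_size_eq_max_iff_completeBipartite [Fintype V] (G : SimpleGraph V)
    (hSTI : IsSTI G) :
    4 * G.edgeSet.ncard = Fintype.card V ^ 2 - 1 ↔
      Nonempty (G ≃g completeBipartiteGraph (Fin ((Fintype.card V - 1) / 2)) (Fin ((Fintype.card V + 1) / 2))) := by
  constructor
  · intro hm
    set s := {v | Even (transmission G v)}
    have hbip : G.IsBipartiteWith s sᶜ := hSTI.isBipartiteWith_even_transmission
    have hn : s.ncard + sᶜ.ncard = Fintype.card V := by
      rw [Set.ncard_add_ncard_compl, Nat.card_eq_fintype_card]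
    have hpos : 0 < Fintype.card V := Fintype.card_pos_iff.mpr hSTI.1.nonempty
    obtain ⟨hmax, hsizes⟩ := mul_eq_and_succ_of_four_mul_add_one_eq_sq hbip.ncard_edgeSet_le_s4
      (by rw [hn]; have := Nat.one_le_pow 2 _ hpos; omega)
    rcases hsizes with h | h
    · exact hbip.nonempty_iso_completeBipartiteGraph (by omega) (by omega) hmax.ge
    · have hbip' : G.IsBipartiteWith sᶜ sᶜᶜ := by rw [compl_compl]; exact hbip.symm
      refine hbip'.nonempty_iso_completeBipartiteGraph (by omega) ?_ ?_
      · rw [compl_compl]; omega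
      · rw [compl_compl, mul_comm]; exact hmax.ge
  · rintro ⟨φ⟩
    have hn := Fintype.card_congr φ.toEquiv
    rw [Fintype.card_sum, Fintype.card_fin, Fintype.card_fin] at hn
    rw [φ.ncard_edgeSet_eq, SimpleGraph.ncard_edgeSet_completeBipartiteGraph, Nat.card_fin,
      Nat.card_fin]
    exact four_mul_pred_div_two_mul_succ_div_two hn
end

section
/- If G is a stepwise transmission irregular (STI) graph of order n ≥ 5, then ecc(G) ≥ 2n, with equality if and only if G is isomorphic to K_{(n−1)/2,(n+1)/2}. -/
open Finset

variable {V : Type*}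

/-- The eccentricity of a vertex: the maximum distance to other vertices. -/
noncomputable def eccentricity [Fintype V] (G : SimpleGraph V) (v : V) : ℕ :=
  Finset.univ.sup fun u => G.dist v u

/-- The eccentricity of a graph: the sum of the eccentricities of its vertices. -/
noncomputable def graphEcc [Fintype V] (G : SimpleGraph V) : ℕ :=
  ∑ v, eccentricity G v

/-! The parity of the transmission changes along every edge of an STI graph, so it is a proper
2-colouring. A vertex of eccentricity at most 1 would make the graph a star `K_{1,n-1}`, whose
transmissions differ by `n - 2 > 1`; hence every eccentricity is at least 2 and `ecc(G) ≥ 2n`.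
Equality means diameter 2, and in a bipartite graph of diameter 2 the pairs at odd distance are
exactly the edges, so `G` is complete bipartite on its parity classes. In `K_{a,b}` the
transmissions of the two sides differ by `|a - b|`, which is therefore 1. -/

open SimpleGraph

section Eccentricity

variable [Fintype V] {G : SimpleGraph V}

lemma eccentricity_le_iff {v : V} {k : ℕ} :
    eccentricity G v ≤ k ↔ ∀ u, G.dist v u ≤ k := by
  simp [eccentricity, Finset.sup_le_iff]

lemma dist_le_eccentricity (v u : V) : G.dist v u ≤ eccentricity G v :=
  eccentricity_le_iff.1 le_rfl u

lemma two_mul_card_le_graphEcc (h : ∀ v, 2 ≤ eccentricity G v) :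
    2 * Fintype.card V ≤ graphEcc G := by
  simpa [graphEcc, mul_comm] using Finset.sum_le_sum fun v (_ : v ∈ univ) => h v

lemma graphEcc_eq_two_mul_card_iff (h : ∀ v, 2 ≤ eccentricity G v) :
    graphEcc G = 2 * Fintype.card V ↔ ∀ v, eccentricity G v = 2 := by
  have := Finset.sum_eq_sum_iff_of_le fun v (_ : v ∈ univ) => h v
  simp_all [graphEcc, mul_comm, eq_comm]

end Eccentricity

lemma Bool.surjective_of_ne {α : Type*} {f : α → Bool} {x y : α} (h : f x ≠ f y) :
    Function.Surjective f := by
  intro b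
  by_cases hx : f x = b
  · exact ⟨x, hx⟩
  · exact ⟨y, by revert h hx; cases f x <;> cases f y <;> cases b <;> simp⟩

lemma card_filter_eq_add_card_filter_eq_not [Fintype V] (q : V → Bool) (b : Bool) :
    #{v | q v = b} + #{v | q v = !b} = Fintype.card V := by
  simpa [Bool.eq_not_iff] using card_filter_add_card_filter_not (s := univ) fun v => q v = b

lemma SimpleGraph.Coloring.adj_iff_ne_of_dist_le_two {G : SimpleGraph V} (hconn : G.Connected)
    (c : G.Coloring Bool) (hdiam : ∀ u w, G.dist u w ≤ 2) (u w : V) :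
    G.Adj u w ↔ c u ≠ c w := by
  refine ⟨c.valid, fun h => ?_⟩
  obtain ⟨p, hp⟩ := hconn.exists_walk_length_eq_dist u w
  have hodd : Odd p.length :=
    (c.odd_length_iff_not_congr p).2 (by revert h; cases c u <;> cases c w <;> simp)
  obtain ⟨k, hk⟩ := hodd
  have := hdiam u w
  rw [← dist_eq_one_iff_adj]
  omega

lemma SimpleGraph.Iso.adj_iff_isLeft_ne {α β : Type*} {G : SimpleGraph V}
    (e : G ≃g completeBipartiteGraph α β) (u w : V) :
    G.Adj u w ↔ (e u).isLeft ≠ (e w).isLeft := by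
  rw [← e.map_adj_iff]
  cases e u <;> cases e w <;> simp

section CompleteBipartite

variable {G : SimpleGraph V} {q : V → Bool}

lemma dist_eq_of_adj_iff_ne [DecidableEq V] (hq : ∀ u w, G.Adj u w ↔ q u ≠ q w)
    (hsurj : Function.Surjective q) (u w : V) :
    G.dist u w = if u = w then 0 else if q u = q w then 2 else 1 := by
  split_ifs with huw hqe
  · subst huw; exact dist_self
  · obtain ⟨x, hx⟩ := hsurj (!q u)
    have hux : G.Adj u x := (hq u x).2 (by simp [hx])
    have hxw : G.Adj x w := (hq x w).2 (by simp [hx, hqe])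
    have hle : G.dist u w ≤ 2 := by simpa using dist_le (hux.toWalk.append hxw.toWalk)
    have hpos := (hux.reachable.trans hxw.reachable).pos_dist_of_ne huw
    have hne : G.dist u w ≠ 1 := fun h => (hq u w).1 (dist_eq_one_iff_adj.1 h) hqe
    omega
  · exact dist_eq_one_iff_adj.2 ((hq u w).2 hqe)

variable [Fintype V]

lemma eccentricity_le_two_of_adj_iff_ne (hq : ∀ u w, G.Adj u w ↔ q u ≠ q w)
    (hsurj : Function.Surjective q) (v : V) : eccentricity G v ≤ 2 := by
  classical
  exact eccentricity_le_iff.2 fun u => by rw [dist_eq_of_adj_iff_ne hq hsurj]; split_ifs <;> omega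

lemma transmission_add_two_of_adj_iff_ne (hq : ∀ u w, G.Adj u w ↔ q u ≠ q w)
    (hsurj : Function.Surjective q) (u : V) :
    transmission G u + 2 = 2 * #{w | q w = q u} + #{w | q w = !q u} := by
  classical
  have hdist (w : V) : G.dist u w + (if w = u then 2 else 0) = if q w = q u then 2 else 1 := by
    rw [dist_eq_of_adj_iff_ne hq hsurj]
    split_ifs <;> simp_all
  calc transmission G u + 2 = ∑ w, (G.dist u w + if w = u then 2 else 0) := by
        simp [transmission, sum_add_distrib]
    _ = ∑ w, if q w = q u then 2 else 1 := sum_congr rfl fun w _ => hdist w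
    _ = _ := by simp [sum_ite, mul_comm, Bool.eq_not_iff]

lemma nonempty_iso_completeBipartiteGraph (hq : ∀ u w, G.Adj u w ↔ q u ≠ q w) {b : Bool}
    {m m' : ℕ} (hm : #{v | q v = b} = m) (hm' : #{v | q v = !b} = m') :
    Nonempty (G ≃g completeBipartiteGraph (Fin m) (Fin m')) := by
  have eL : {v // q v = b} ≃ Fin m :=
    Fintype.equivFinOfCardEq (by rw [Fintype.card_subtype, hm])
  have eR : {v // ¬q v = b} ≃ Fin m' :=
    Fintype.equivFinOfCardEq (by simp only [Fintype.card_subtype, ← Bool.eq_not_iff, hm'])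
  refine ⟨⟨(Equiv.sumCompl fun v => q v = b).symm.trans (eL.sumCongr eR), ?_⟩⟩
  intro u w
  have hside : q u ≠ q w ↔ (q u = b ↔ ¬q w = b) := by
    cases q u <;> cases q w <;> cases b <;> decide
  rw [hq u w, hside]
  by_cases hu : q u = b <;> by_cases hw : q w = b <;>
    simp [Equiv.sumCompl_symm_apply_of_pos, Equiv.sumCompl_symm_apply_of_neg, hu, hw]

end CompleteBipartite

namespace IsSTI

variable [Fintype V] {G : SimpleGraph V}

noncomputable def parityColoring (hG : IsSTI G) : G.Coloring Bool :=
  Coloring.mk (fun v => (transmission G v).bodd) fun {u w} h => by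
    rcases (by have := hG.2 u w h; omega :
        transmission G u = transmission G w + 1 ∨ transmission G w = transmission G u + 1) with
      huw | huw <;> simp [huw]

lemma natAbs_card_sub_card_eq_one (hG : IsSTI G) {q : V → Bool}
    (hq : ∀ u w, G.Adj u w ↔ q u ≠ q w) (hsurj : Function.Surjective q) (b : Bool) :
    ((#{v | q v = b} : ℤ) - #{v | q v = !b}).natAbs = 1 := by
  obtain ⟨u, rfl⟩ := hsurj b
  obtain ⟨w, hw⟩ := hsurj (!q u)
  have hu := transmission_add_two_of_adj_iff_ne hq hsurj u
  have hw' := transmission_add_two_of_adj_iff_ne hq hsurj w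
  rw [hw, Bool.not_not] at hw'
  have := hG.2 u w ((hq u w).2 (by simp [hw]))
  omega

lemma two_le_eccentricity (hG : IsSTI G) (hn : 4 ≤ Fintype.card V) (v : V) :
    2 ≤ eccentricity G v := by
  by_contra! hv
  set c := hG.parityColoring
  -- `v` is adjacent to every other vertex, and `G` is the star with centre `v`
  have hadj (u : V) (hu : u ≠ v) : G.Adj v u := by
    have := hG.1.pos_dist_of_ne hu.symm
    have := dist_le_eccentricity (G := G) v u
    exact dist_eq_one_iff_adj.1 (by omega)
  have hc (u : V) (hu : u ≠ v) : c u = !c v := Bool.eq_not_of_ne (c.valid (hadj u hu)).symm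
  have hq (u w : V) : G.Adj u w ↔ c u ≠ c w := by
    refine ⟨c.valid, fun h => ?_⟩
    by_cases hu : u = v
    · subst hu; exact hadj w fun hw => h (hw ▸ rfl)
    by_cases hw : w = v
    · subst hw; exact (hadj u hu).symm
    exact absurd ((hc u hu).trans (hc w hw).symm) h
  obtain ⟨u, hu⟩ := Fintype.exists_ne_of_one_lt_card (by omega) v
  have hsides :=
    hG.natAbs_card_sub_card_eq_one hq (Bool.surjective_of_ne (c.valid (hadj u hu))) (c v)
  have hone : #{w | c w = c v} = 1 := by
    rw [card_eq_one]
    refine ⟨v, eq_singleton_iff_unique_mem.2 ⟨by simp, fun w hw => ?_⟩⟩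
    by_contra hwv
    simp [hc w hwv] at hw
  have htot := card_filter_eq_add_card_filter_eq_not c (c v)
  omega

lemma nonempty_iso_of_dist_le_two [Nontrivial V] (hG : IsSTI G)
    (hdiam : ∀ u w, G.dist u w ≤ 2) :
    Nonempty (G ≃g completeBipartiteGraph (Fin ((Fintype.card V - 1) / 2))
      (Fin ((Fintype.card V + 1) / 2))) := by
  set c := hG.parityColoring
  have hq := c.adj_iff_ne_of_dist_le_two hG.1 hdiam
  obtain ⟨v⟩ := hG.1.nonempty
  obtain ⟨w, hvw⟩ := hG.1.preconnected.exists_adj_of_nontrivial v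
  have hsides := hG.natAbs_card_sub_card_eq_one hq (Bool.surjective_of_ne ((hq v w).1 hvw)) true
  have htot := card_filter_eq_add_card_filter_eq_not c true
  simp only [Bool.not_true] at hsides htot
  rcases (by omega : #{v | c v = true} < #{v | c v = false} ∨
      #{v | c v = false} < #{v | c v = true}) with h | h
  · exact nonempty_iso_completeBipartiteGraph hq (b := true) (by omega)
      (by simp only [Bool.not_true]; omega)
  · exact nonempty_iso_completeBipartiteGraph hq (b := false) (by omega)
      (by simp only [Bool.not_false]; omega)

end IsSTI

theorem sti_ecc_lower_bound [Fintype V] (G : SimpleGraph V)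
    (hSTI : IsSTI G) (hn : 5 ≤ Fintype.card V) :
    2 * Fintype.card V ≤ graphEcc G ∧
    (graphEcc G = 2 * Fintype.card V ↔ Nonempty (G ≃g completeBipartiteGraph (Fin ((Fintype.card V - 1) / 2)) (Fin ((Fintype.card V + 1) / 2)))) := by
  have : Nontrivial V := Fintype.one_lt_card_iff_nontrivial.1 (by omega)
  have hecc : ∀ v, 2 ≤ eccentricity G v := hSTI.two_le_eccentricity (by omega)
  refine ⟨two_mul_card_le_graphEcc hecc, ?_⟩
  rw [graphEcc_eq_two_mul_card_iff hecc]
  constructor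
  · intro h
    exact hSTI.nonempty_iso_of_dist_le_two fun u w => (dist_le_eccentricity u w).trans (h u).le
  · rintro ⟨e⟩ v
    obtain ⟨w, hvw⟩ := hSTI.1.preconnected.exists_adj_of_nontrivial v
    have hq := e.adj_iff_isLeft_ne
    exact le_antisymm
      (eccentricity_le_two_of_adj_iff_ne hq (Bool.surjective_of_ne ((hq v w).1 hvw)) v) (hecc v)
end

section
/- If G is a stepwise transmission irregular (STI) graph of order n ≥ 5, then W(G) ≥ (3n² − 4n + 1)/4, with equality if and only if G is isomorphic to K_{(n−1)/2,(n+1)/2}. -/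
open Finset

variable {V : Type*}

/-- The Wiener index: the sum of distances over all unordered pairs of vertices. -/
noncomputable def wiener [Fintype V] [DecidableEq V] (G : SimpleGraph V) : ℕ :=
  ∑ e : Sym2 V, Sym2.lift ⟨fun u v => G.dist u v, fun _ _ => SimpleGraph.dist_comm⟩ e

/-!
Transmissions of adjacent vertices of an STI graph differ by one, so the vertices of even and of
odd transmission form a bipartition, with parts of sizes `a + b = n`. Non-adjacent vertices are at
distance at least two, hence `W + m ≥ n (n - 1)` for the number `m ≤ a b` of edges, that is
`4 W ≥ 3 n² - 4 n + (a - b)² + 4 (a b - m)`. The error term vanishes only for `K_{a,a}`, which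
has constant transmission and so is not STI. It equals one only when `m = a b` and
`|a - b| = 1`, i.e. for `K_{(n-1)/2,(n+1)/2}`; that graph has diameter two, so there both
estimates are sharp.
-/

theorem sum_prod_eq_two_nsmul_sum_sym2_lift {M : Type*} [AddCommMonoid M] [Fintype V]
    [DecidableEq V] (f : V → V → M) (hf : ∀ a b, f a b = f b a) (hd : ∀ a, f a a = 0) :
    ∑ p : V × V, f p.1 p.2 = 2 • ∑ e : Sym2 V, Sym2.lift ⟨f, hf⟩ e := by
  rw [smul_sum, ← sum_fiberwise_of_maps_to (g := fun p : V × V => s(p.1, p.2))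
    (fun p _ => mem_univ _)]
  refine sum_congr rfl fun e _ => ?_
  induction e using Sym2.ind with
  | _ a b =>
    rw [Sym2.lift_mk]
    change _ = 2 • f a b
    by_cases hab : a = b
    · subst hab
      rw [hd, smul_zero]
      refine sum_eq_zero fun ⟨x, y⟩ hxy => ?_
      obtain ⟨-, ⟨rfl, rfl⟩ | ⟨rfl, rfl⟩⟩ := by
        simpa only [mem_filter, Sym2.eq_iff] using hxy
      all_goals exact hd _
    · have hfiber : ({p | s(p.1, p.2) = s(a, b)} : Finset (V × V)) = {(a, b), (b, a)} := by
        ext ⟨x, y⟩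
        simp only [mem_filter, mem_univ, true_and, mem_insert, mem_singleton, Prod.mk.injEq,
          Sym2.eq_iff]
      rw [hfiber, sum_pair (by simp [hab]), hf b a, two_nsmul]

theorem two_mul_wiener [Fintype V] [DecidableEq V] (G : SimpleGraph V) :
    2 * wiener G = ∑ v, transmission G v := by
  rw [wiener, ← smul_eq_mul, ← sum_prod_eq_two_nsmul_sum_sym2_lift _ _ fun _ => G.dist_self,
    Fintype.sum_prod_type]
  rfl

theorem two_mul_card_sub_one_eq_sum_ite [Fintype V] [DecidableEq V] (v : V) :
    2 * (Fintype.card V - 1) = ∑ u, if u = v then 0 else 2 := by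
  rw [sum_ite, sum_const_zero, zero_add, sum_const, smul_eq_mul, filter_ne', card_erase_of_mem
    (mem_univ v), card_univ, mul_comm]

namespace SimpleGraph

variable {G : SimpleGraph V} {s t : Finset V} {v w : V}

section

variable [Fintype V] [DecidableRel G.Adj]

theorem transmission_add_degree (v : V) :
    transmission G v + G.degree v = ∑ u, (G.dist v u + if G.Adj v u then 1 else 0) := by
  rw [sum_add_distrib, sum_boole, ← neighborFinset_eq_filter, card_neighborFinset_eq_degree]
  rfl

theorem two_mul_card_sub_one_le_transmission_add_degree [DecidableEq V] (hc : G.Connected)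
    (v : V) :
    2 * (Fintype.card V - 1) ≤ transmission G v + G.degree v := by
  rw [two_mul_card_sub_one_eq_sum_ite v, transmission_add_degree]
  refine sum_le_sum fun u _ => ?_
  by_cases huv : u = v
  · simp [huv]
  by_cases hadj : G.Adj v u
  · simp [huv, hadj, dist_eq_one_iff_adj.mpr hadj]
  · simp only [huv, hadj, if_false, add_zero]
    exact hc.one_lt_dist_of_ne_of_not_adj (Ne.symm huv) hadj

theorem transmission_add_degree_of_dist_le_two [DecidableEq V] (hc : G.Connected) {v : V}
    (hv : ∀ u, G.dist v u ≤ 2) : transmission G v + G.degree v = 2 * (Fintype.card V - 1) := by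
  rw [two_mul_card_sub_one_eq_sum_ite v, transmission_add_degree]
  refine sum_congr rfl fun u _ => ?_
  by_cases huv : u = v
  · simp [huv]
  by_cases hadj : G.Adj v u
  · simp [huv, hadj, dist_eq_one_iff_adj.mpr hadj]
  · simp only [huv, hadj, if_false, add_zero]
    exact le_antisymm (hv u) (hc.one_lt_dist_of_ne_of_not_adj (Ne.symm huv) hadj)

theorem card_mul_card_sub_one_le_wiener_add_card_edgeFinset [DecidableEq V] (hc : G.Connected) :
    Fintype.card V * (Fintype.card V - 1) ≤ wiener G + #G.edgeFinset := by
  suffices 2 * (Fintype.card V * (Fintype.card V - 1)) ≤ 2 * (wiener G + #G.edgeFinset) by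
    omega
  calc 2 * (Fintype.card V * (Fintype.card V - 1))
      = ∑ _v : V, 2 * (Fintype.card V - 1) := by simp [mul_left_comm]
    _ ≤ ∑ v, (transmission G v + G.degree v) :=
      sum_le_sum fun v _ => two_mul_card_sub_one_le_transmission_add_degree hc v
    _ = 2 * (wiener G + #G.edgeFinset) := by
      rw [sum_add_distrib, sum_degrees_eq_twice_card_edges, ← two_mul_wiener, mul_add]

theorem wiener_add_card_edgeFinset_of_dist_le_two [DecidableEq V] (hc : G.Connected)
    (h : ∀ u v, G.dist u v ≤ 2) :
    wiener G + #G.edgeFinset = Fintype.card V * (Fintype.card V - 1) := by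
  suffices 2 * (wiener G + #G.edgeFinset) = 2 * (Fintype.card V * (Fintype.card V - 1)) by
    omega
  rw [mul_add, two_mul_wiener, ← sum_degrees_eq_twice_card_edges, ← sum_add_distrib]
  simp [transmission_add_degree_of_dist_le_two hc (h _), mul_left_comm]

theorem Connected.le_four_mul_wiener [DecidableEq V] (hc : G.Connected) (s : Finset V) :
    3 * (Fintype.card V : ℤ) ^ 2 - 4 * Fintype.card V + (#s - #sᶜ : ℤ) ^ 2
      + 4 * (#s * #sᶜ - #G.edgeFinset : ℤ) ≤ 4 * wiener G := by
  have hn : 1 ≤ Fintype.card V := Fintype.card_pos_iff.mpr hc.nonempty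
  have hW := card_mul_card_sub_one_le_wiener_add_card_edgeFinset hc
  zify [hn] at hW
  have hsq : (#s - #sᶜ : ℤ) ^ 2 + 4 * (#s * #sᶜ) = (Fintype.card V : ℤ) ^ 2 := by
    rw [← card_add_card_compl s]
    push_cast
    ring
  linarith

end

def IsCompleteBipartiteWith (G : SimpleGraph V) (s : Finset V) : Prop :=
  ∀ u v, G.Adj u v ↔ (u ∈ s ↔ v ∉ s)

theorem IsCompleteBipartiteWith.dist_le_two (h : G.IsCompleteBipartiteWith s)
    (hc : G.Connected) (u v : V) : G.dist u v ≤ 2 := by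
  by_cases huv : u = v
  · simp [huv]
  by_cases hadj : G.Adj u v
  · simp [dist_eq_one_iff_adj.mpr hadj]
  have : Nontrivial V := nontrivial_of_ne u v huv
  obtain ⟨w, huw⟩ := hc.preconnected.exists_adj_of_nontrivial u
  have hwv : G.Adj w v := by
    rw [h] at huw hadj ⊢
    tauto
  simpa using dist_le (huw.toWalk.append hwv.toWalk)

section

variable [Fintype V]

theorem isCompleteBipartiteWith_of_iso {α β : Type*} (φ : G ≃g completeBipartiteGraph α β) :
    G.IsCompleteBipartiteWith {v | (φ v).isLeft} := fun u v => by
  rw [← φ.map_rel_iff]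
  simp only [mem_filter, mem_univ, true_and, completeBipartiteGraph_adj]
  cases φ u <;> cases φ v <;> simp

theorem card_edgeFinset_completeBipartiteGraph {α β : Type*} [Fintype α] [Fintype β]
    [Fintype (completeBipartiteGraph α β).edgeSet] :
    #(completeBipartiteGraph α β).edgeFinset = Fintype.card α * Fintype.card β := by
  have := encard_edgeSet_completeBipartiteGraph (W₁ := α) (W₂ := β)
  rw [← coe_edgeFinset, Set.encard_coe_eq_coe_finsetCard, ENat.card_eq_coe_fintype_card,
    ENat.card_eq_coe_fintype_card] at this
  exact_mod_cast this

section

variable [DecidableRel G.Adj]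

theorem IsBipartiteWith.card_edgeFinset_le (h : G.IsBipartiteWith ↑s ↑t) :
    #G.edgeFinset ≤ #s * #t := by
  rw [← isBipartiteWith_sum_degrees_eq_card_edges h, ← smul_eq_mul]
  exact sum_le_card_nsmul _ _ _ fun v hv => isBipartiteWith_degree_le h hv

theorem IsBipartiteWith.adj_of_card_edgeFinset_eq (h : G.IsBipartiteWith ↑s ↑t)
    (hE : #G.edgeFinset = #s * #t) (hv : v ∈ s) (hw : w ∈ t) : G.Adj v w := by
  have hdeg : ∀ u ∈ s, G.degree u = #t := by
    refine (sum_eq_sum_iff_of_le fun u hu => isBipartiteWith_degree_le h hu).mp ?_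
    rw [isBipartiteWith_sum_degrees_eq_card_edges h, hE, sum_const, smul_eq_mul]
  have hnbr : G.neighborFinset v = t :=
    eq_of_subset_of_card_le (isBipartiteWith_neighborFinset_subset h hv) (hdeg v hv).ge
  rwa [← hnbr, mem_neighborFinset] at hw

end

variable [DecidableEq V]

theorem IsCompleteBipartiteWith.compl (h : G.IsCompleteBipartiteWith s) :
    G.IsCompleteBipartiteWith sᶜ := fun u v => by
  rw [h u v, mem_compl, mem_compl]
  tauto

theorem IsCompleteBipartiteWith.nonempty_iso_completeBipartiteGraph
    (h : G.IsCompleteBipartiteWith s) {α β : Type*} [Fintype α] [Fintype β]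
    (hα : Fintype.card α = #s) (hβ : Fintype.card β = #sᶜ) :
    Nonempty (G ≃g completeBipartiteGraph α β) := by
  let e : G ≃g completeBipartiteGraph {v // v ∈ s} {v // v ∉ s} :=
    { (Equiv.sumCompl (· ∈ s)).symm with
      map_rel_iff' := fun {u v} => by
        by_cases hu : u ∈ s <;> by_cases hv : v ∈ s <;>
          simp [Equiv.sumCompl_symm_apply_of_pos, Equiv.sumCompl_symm_apply_of_neg, hu, hv, h u v] }
  refine ⟨e.trans (completeBipartiteGraphCongr (Fintype.equivOfCardEq ?_)
    (Fintype.equivOfCardEq ?_))⟩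
  · rw [Fintype.card_coe, hα]
  · rw [Fintype.card_subtype_compl, Fintype.card_coe, hβ, card_compl]

variable [DecidableRel G.Adj]

theorem IsCompleteBipartiteWith.degree_eq (h : G.IsCompleteBipartiteWith s) (hv : v ∈ s) :
    G.degree v = #sᶜ := by
  rw [← card_neighborFinset_eq_degree]
  congr 1
  ext w
  simp [h v w, hv]

theorem IsBipartiteWith.isCompleteBipartiteWith_of_card_edgeFinset_eq
    (h : G.IsBipartiteWith ↑s ↑sᶜ) (hE : #G.edgeFinset = #s * #sᶜ) :
    G.IsCompleteBipartiteWith s := by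
  intro u v
  constructor
  · intro hadj
    rcases h.mem_of_adj hadj with ⟨hu, hv⟩ | ⟨hu, hv⟩ <;>
      simp_all only [mem_coe, mem_compl, not_true_eq_false, not_false_eq_true]
  · intro huv
    by_cases hu : u ∈ s
    · exact h.adj_of_card_edgeFinset_eq hE hu (mem_compl.mpr (huv.mp hu))
    · exact (h.adj_of_card_edgeFinset_eq hE (not_not.mp (mt huv.mpr hu)) (mem_compl.mpr hu)).symm

end

variable [Fintype V] [DecidableEq V]

theorem IsBipartiteWith.three_mul_sq_sub_four_mul_add_one_le_four_mul_wiener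
    (hc : G.Connected) (h : G.IsBipartiteWith ↑s ↑sᶜ)
    (hbal : G.IsCompleteBipartiteWith s → #s ≠ #sᶜ) :
    3 * (Fintype.card V : ℤ) ^ 2 - 4 * Fintype.card V + 1 ≤ 4 * wiener G := by
  classical
  have hle := hc.le_four_mul_wiener s
  rcases h.card_edgeFinset_le.lt_or_eq with hlt | heq
  · have : (#G.edgeFinset : ℤ) + 1 ≤ #s * #sᶜ := by exact_mod_cast hlt
    nlinarith [sq_nonneg ((#s : ℤ) - #sᶜ)]
  · have hne : (#s : ℤ) - #sᶜ ≠ 0 :=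
      sub_ne_zero.mpr (by exact_mod_cast hbal (h.isCompleteBipartiteWith_of_card_edgeFinset_eq heq))
    have := one_le_sq_iff_one_le_abs _ |>.mpr (Int.one_le_abs hne)
    rw [heq] at hle
    push_cast at hle
    linarith

theorem IsBipartiteWith.nonempty_iso_of_four_mul_wiener_eq
    (hc : G.Connected) (h : G.IsBipartiteWith ↑s ↑sᶜ)
    (hbal : G.IsCompleteBipartiteWith s → #s ≠ #sᶜ)
    (heq : 4 * (wiener G : ℤ) = 3 * (Fintype.card V : ℤ) ^ 2 - 4 * Fintype.card V + 1) :
    Nonempty (G ≃g completeBipartiteGraph (Fin ((Fintype.card V - 1) / 2))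
      (Fin ((Fintype.card V + 1) / 2))) := by
  classical
  have hle := hc.le_four_mul_wiener s
  have hE : #G.edgeFinset = #s * #sᶜ := by
    refine h.card_edgeFinset_le.antisymm ?_
    have : (#s * #sᶜ : ℤ) ≤ #G.edgeFinset := by nlinarith [sq_nonneg ((#s : ℤ) - #sᶜ)]
    exact_mod_cast this
  have hcomplete := h.isCompleteBipartiteWith_of_card_edgeFinset_eq hE
  have hsq : ((#s : ℤ) - #sᶜ) ^ 2 ≤ 1 := by
    rw [hE] at hle
    push_cast at hle
    linarith
  have hcard := card_add_card_compl s
  have habs := abs_le.mp (sq_le_one_iff_abs_le_one _ |>.mp hsq)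
  rcases Nat.lt_or_gt_of_ne (hbal hcomplete) with hlt | hlt
  · exact hcomplete.nonempty_iso_completeBipartiteGraph (by rw [Fintype.card_fin]; omega)
      (by rw [Fintype.card_fin]; omega)
  · exact hcomplete.compl.nonempty_iso_completeBipartiteGraph (by rw [Fintype.card_fin]; omega)
      (by rw [compl_compl, Fintype.card_fin]; omega)

theorem four_mul_wiener_of_iso_completeBipartiteGraph (hc : G.Connected)
    (φ : G ≃g completeBipartiteGraph (Fin ((Fintype.card V - 1) / 2))
      (Fin ((Fintype.card V + 1) / 2))) :
    4 * (wiener G : ℤ) = 3 * (Fintype.card V : ℤ) ^ 2 - 4 * Fintype.card V + 1 := by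
  classical
  have hn := Fintype.card_congr φ.toEquiv
  rw [Fintype.card_sum, Fintype.card_fin, Fintype.card_fin] at hn
  have hpos := Fintype.card_pos_iff.mpr hc.nonempty
  obtain ⟨p, hp⟩ : ∃ p, Fintype.card V = 2 * p + 1 := ⟨(Fintype.card V - 1) / 2, by omega⟩
  have hWE := wiener_add_card_edgeFinset_of_dist_le_two hc
    ((isCompleteBipartiteWith_of_iso φ).dist_le_two hc)
  rw [φ.card_edgeFinset_eq, card_edgeFinset_completeBipartiteGraph, Fintype.card_fin,
    Fintype.card_fin, hp, show (2 * p + 1 - 1) / 2 = p by omega,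
    show (2 * p + 1 + 1) / 2 = p + 1 by omega, Nat.add_sub_cancel] at hWE
  zify at hWE
  rw [hp]
  push_cast
  linear_combination 4 * hWE

end SimpleGraph

namespace IsSTI

variable [Fintype V] [DecidableEq V] {G : SimpleGraph V}

theorem isBipartiteWith (hG : IsSTI G) :
    G.IsBipartiteWith ↑({v | Even (transmission G v)} : Finset V)
      ↑({v | Even (transmission G v)} : Finset V)ᶜ := by
  refine ⟨by rw [coe_compl]; exact disjoint_compl_right, fun u v huv => ?_⟩
  have hdiff := hG.2 u v huv
  have hparity : Even (transmission G u) ↔ ¬ Even (transmission G v) := by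
    rw [Nat.even_iff, Nat.even_iff]
    omega
  simp only [coe_compl, Set.mem_compl_iff, mem_coe, mem_filter, mem_univ, true_and]
  tauto

theorem card_ne_card_compl (hG : IsSTI G)
    (h : G.IsCompleteBipartiteWith {v | Even (transmission G v)}) :
    #({v | Even (transmission G v)} : Finset V) ≠
      #({v | Even (transmission G v)} : Finset V)ᶜ := by
  classical
  set s : Finset V := {v | Even (transmission G v)} with hs
  intro hcard
  have hpos : 0 < #s := by
    have := card_add_card_compl s
    have := Fintype.card_pos_iff.mpr hG.1.nonempty
    omega
  obtain ⟨u, hu⟩ := card_pos.mp hpos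
  obtain ⟨v, hv⟩ := card_pos.mp (hcard ▸ hpos)
  have htu := SimpleGraph.transmission_add_degree_of_dist_le_two hG.1 (h.dist_le_two hG.1 u)
  have htv := SimpleGraph.transmission_add_degree_of_dist_le_two hG.1 (h.dist_le_two hG.1 v)
  rw [h.degree_eq hu] at htu
  rw [h.compl.degree_eq hv, compl_compl] at htv
  have htransmission : transmission G u = transmission G v := by omega
  simp only [hs, mem_compl, mem_filter, mem_univ, true_and] at hu hv
  exact hv (htransmission ▸ hu)

end IsSTI

theorem sti_wiener_lower_bound_general [Fintype V] [DecidableEq V] (G : SimpleGraph V)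
    (hSTI : IsSTI G) :
    3 * (Fintype.card V : ℤ) ^ 2 - 4 * (Fintype.card V : ℤ) + 1 ≤ 4 * (wiener G : ℤ) ∧
    (4 * (wiener G : ℤ) = 3 * (Fintype.card V : ℤ) ^ 2 - 4 * (Fintype.card V : ℤ) + 1 ↔
      Nonempty (G ≃g completeBipartiteGraph (Fin ((Fintype.card V - 1) / 2)) (Fin ((Fintype.card V + 1) / 2)))) := by
  have hb := hSTI.isBipartiteWith
  refine ⟨hb.three_mul_sq_sub_four_mul_add_one_le_four_mul_wiener hSTI.1 hSTI.card_ne_card_compl,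
    hb.nonempty_iso_of_four_mul_wiener_eq hSTI.1 hSTI.card_ne_card_compl,
    fun ⟨φ⟩ => SimpleGraph.four_mul_wiener_of_iso_completeBipartiteGraph hSTI.1 φ⟩

theorem sti_wiener_lower_bound [Fintype V] [DecidableEq V] (G : SimpleGraph V)
    (hSTI : IsSTI G) (hn : 5 ≤ Fintype.card V) :
    3 * (Fintype.card V : ℤ) ^ 2 - 4 * (Fintype.card V : ℤ) + 1 ≤ 4 * (wiener G : ℤ) ∧
    (4 * (wiener G : ℤ) = 3 * (Fintype.card V : ℤ) ^ 2 - 4 * (Fintype.card V : ℤ) + 1 ↔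
      Nonempty (G ≃g completeBipartiteGraph (Fin ((Fintype.card V - 1) / 2)) (Fin ((Fintype.card V + 1) / 2)))) :=
  sti_wiener_lower_bound_general G hSTI
end

section
/- If G is a stepwise transmission irregular (STI) graph of order n ≥ 5, then min{Tr_G(v) : v ∈ V(G)} ≥ (3n − 5)/2, with equality if and only if G is isomorphic to K_{(n−1)/2,(n+1)/2}. -/
open Finset

variable {V : Type*}

/-!
In an STI graph the endpoints of an edge have transmissions of different parity, so the two
parity classes of the transmission are independent sets. A vertex `v` in a class `S` is at
distance at least `2` from the rest of `S` and at least `1` from the other vertices, whence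
`Tr v + 2 ≥ n + |S|`. For a neighbour `u` of `v` the same bound reads `Tr u + 2 ≥ 2n - |S|`,
and `Tr u ≤ Tr v + 1` gives `2 Tr v ≥ 3n - 5`. Equality forces `2|S| = n - 1` and makes both
bounds tight, for `v` and for each of its neighbours; a tight vertex is adjacent to every vertex
outside its class, so `G` is complete bipartite with parts `S` and `Sᶜ`.
-/

namespace SimpleGraph

variable {W : Type*} {G : SimpleGraph V} {G' : SimpleGraph W}

lemma Iso.dist_eq (e : G ≃g G') (u v : V) : G'.dist (e u) (e v) = G.dist u v := by
  by_cases h : G.Reachable u v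
  · refine le_antisymm ?_ ?_
    · obtain ⟨p, hp⟩ := h.exists_walk_length_eq_dist
      simpa [hp] using G'.dist_le (p.map e.toHom)
    · obtain ⟨p, hp⟩ := (h.map e.toHom).exists_walk_length_eq_dist
      simpa [hp] using G.dist_le (p.map e.symm.toHom)
  · rw [dist_eq_zero_of_not_reachable h,
      dist_eq_zero_of_not_reachable (Iso.reachable_iff.not.mpr h)]

lemma Connected.card_le_sum_dist (hG : G.Connected) {v : V} {t : Finset V} (hv : v ∉ t) :
    #t ≤ ∑ u ∈ t, G.dist v u := by
  simpa using card_nsmul_le_sum t (G.dist v) 1 fun u hu ↦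
    hG.pos_dist_of_ne (ne_of_mem_of_not_mem hu hv).symm

lemma Connected.two_mul_card_sub_one_le_sum_dist (hG : G.Connected) {v : V} {s : Finset V}
    (hv : v ∈ s) (hs : ∀ u ∈ s, ¬ G.Adj v u) : 2 * (#s - 1) ≤ ∑ u ∈ s, G.dist v u := by
  classical
  rw [← sum_erase_add s _ hv, dist_self, add_zero, ← card_erase_of_mem hv, mul_comm]
  exact card_nsmul_le_sum _ _ 2 fun u hu ↦
    hG.one_lt_dist_of_ne_of_not_adj (ne_of_mem_erase hu).symm (hs u (mem_of_mem_erase hu))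

end SimpleGraph

section Transmission

variable [Fintype V] {G : SimpleGraph V}

lemma transmission_iso {W : Type*} [Fintype W] {G' : SimpleGraph W} (e : G ≃g G') (v : V) :
    transmission G' (e v) = transmission G v :=
  (Fintype.sum_equiv e.toEquiv _ _ fun u ↦ (e.dist_eq v u).symm).symm

lemma card_add_card_add_dist_le_transmission (hG : G.Connected) {s : Finset V} {v u : V}
    (hv : v ∈ s) (hs : ∀ w ∈ s, ¬ G.Adj v w) (hu : u ∉ s) :
    Fintype.card V + #s + G.dist v u ≤ transmission G v + 3 := by
  classical
  have hsplit : transmission G v =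
      ∑ w ∈ s, G.dist v w + (∑ w ∈ sᶜ.erase u, G.dist v w + G.dist v u) := by
    rw [transmission, ← sum_add_sum_compl s, sum_erase_add _ _ (mem_compl.mpr hu)]
  have hin := hG.two_mul_card_sub_one_le_sum_dist hv hs
  have hout := hG.card_le_sum_dist (t := sᶜ.erase u) fun h ↦ mem_compl.mp (mem_of_mem_erase h) hv
  have hcard := card_erase_of_mem (mem_compl.mpr hu)
  have hcompl := card_compl s
  have hs_pos : 0 < #s := card_pos.mpr ⟨v, hv⟩
  omega

lemma adj_of_transmission_add_two_eq (hG : G.Connected) {s : Finset V} {v u : V}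
    (hv : v ∈ s) (hs : ∀ w ∈ s, ¬ G.Adj v w)
    (htight : transmission G v + 2 = Fintype.card V + #s) (hu : u ∉ s) : G.Adj v u := by
  have hbound := card_add_card_add_dist_le_transmission hG hv hs hu
  have hpos := hG.pos_dist_of_ne (ne_of_mem_of_not_mem hv hu)
  exact SimpleGraph.dist_eq_one_iff_adj.mp (by omega)

lemma transmission_completeBipartiteGraph_inl {α β : Type*} [Fintype α] [Fintype β] [Nonempty β]
    (i : α) : transmission (completeBipartiteGraph α β) (Sum.inl i) =
      2 * (Fintype.card α - 1) + Fintype.card β := by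
  classical
  set K := completeBipartiteGraph α β
  obtain ⟨j⟩ := ‹Nonempty β›
  have hdist : ∀ i' ∈ univ.erase i, K.dist (Sum.inl i) (Sum.inl i') = 2 := by
    intro i' hi'
    have hne : (Sum.inl i : α ⊕ β) ≠ Sum.inl i' := by simpa using (ne_of_mem_erase hi').symm
    have hnadj : ¬ K.Adj (Sum.inl i) (Sum.inl i') := by simp [K]
    let p : K.Walk (Sum.inl i) (Sum.inl i') :=
      .cons (v := Sum.inr j) (by simp [K]) (.cons (by simp [K]) .nil)
    have hle : K.dist (Sum.inl i) (Sum.inl i') ≤ 2 := K.dist_le p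
    have hlt := p.reachable.one_lt_dist_of_ne_of_not_adj hne hnadj
    omega
  rw [transmission, Fintype.sum_sum_type, ← sum_erase_add _ _ (mem_univ i),
    SimpleGraph.dist_self, add_zero, sum_congr rfl hdist, sum_const, card_erase_of_mem (mem_univ i),
    card_univ, smul_eq_mul, mul_comm]
  simp [K, SimpleGraph.dist_eq_one_iff_adj.mpr]

end Transmission

lemma nonempty_iso_completeBipartiteGraph_of_adj_iff [Fintype V] {G : SimpleGraph V}
    (s : Finset V) (h : ∀ x y, G.Adj x y ↔ (x ∈ s ↔ y ∉ s)) {a b : ℕ} (ha : #s = a)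
    (hab : Fintype.card V = a + b) : Nonempty (G ≃g completeBipartiteGraph (Fin a) (Fin b)) := by
  classical
  let eA : {x // x ∈ s} ≃ Fin a := Fintype.equivFinOfCardEq (by simpa using ha)
  let eB : {x // x ∉ s} ≃ Fin b :=
    Fintype.equivFinOfCardEq (by rw [Fintype.card_subtype_compl, Fintype.card_coe]; omega)
  refine ⟨⟨(Equiv.sumCompl (· ∈ s)).symm.trans (eA.sumCongr eB), fun {x y} ↦ ?_⟩⟩
  rw [h]
  by_cases hx : x ∈ s <;> by_cases hy : y ∈ s <;>
    simp [Equiv.sumCompl_symm_apply_of_pos, Equiv.sumCompl_symm_apply_of_neg, hx, hy]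

section STI

variable [Fintype V] {G : SimpleGraph V}

noncomputable def parityClass (G : SimpleGraph V) (v : V) : Finset V :=
  {u | transmission G u % 2 = transmission G v % 2}

@[simp]
lemma mem_parityClass {u v : V} :
    u ∈ parityClass G v ↔ transmission G u % 2 = transmission G v % 2 := by
  simp [parityClass]

lemma self_mem_parityClass (v : V) : v ∈ parityClass G v := mem_parityClass.mpr rfl

namespace IsSTI

variable (hG : IsSTI G)
include hG

lemma transmission_eq_add_one_or {u v : V} (h : G.Adj u v) :
    transmission G u = transmission G v + 1 ∨ transmission G v = transmission G u + 1 := by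
  rcases Int.natAbs_eq_iff.mp (hG.2 u v h) with h' | h' <;> omega

lemma not_adj_of_mem_parityClass {u v : V} (hu : u ∈ parityClass G v) : ¬ G.Adj v u := fun h ↦ by
  rw [mem_parityClass] at hu
  rcases hG.transmission_eq_add_one_or h with h' | h' <;> omega

lemma parityClass_eq_compl_of_adj [DecidableEq V] {u v : V} (h : G.Adj v u) :
    parityClass G u = (parityClass G v)ᶜ := by
  ext w
  rw [mem_compl, mem_parityClass, mem_parityClass]
  rcases hG.transmission_eq_add_one_or h with h' | h' <;> omega

lemma card_add_card_parityClass_le {u v : V} (h : G.Adj v u) :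
    Fintype.card V + #(parityClass G v) ≤ transmission G v + 2 := by
  have hu : u ∉ parityClass G v := fun hu ↦ hG.not_adj_of_mem_parityClass hu h
  have := card_add_card_add_dist_le_transmission hG.1 (self_mem_parityClass v)
    (fun _ ↦ hG.not_adj_of_mem_parityClass) hu
  rw [SimpleGraph.dist_eq_one_iff_adj.mpr h] at this
  omega

lemma adj_of_notMem_parityClass {u v : V}
    (htight : transmission G v + 2 = Fintype.card V + #(parityClass G v))
    (hu : u ∉ parityClass G v) : G.Adj v u :=
  adj_of_transmission_add_two_eq hG.1 (self_mem_parityClass v)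
    (fun _ ↦ hG.not_adj_of_mem_parityClass) htight hu

lemma card_parityClass_add_card_parityClass {u v : V} (h : G.Adj v u) :
    #(parityClass G v) + #(parityClass G u) = Fintype.card V := by
  classical
  rw [hG.parityClass_eq_compl_of_adj h, card_add_card_compl]

lemma three_mul_card_le {u v : V} (h : G.Adj v u) :
    3 * Fintype.card V ≤ 2 * transmission G v + 5 := by
  have hv := hG.card_add_card_parityClass_le h
  have hu := hG.card_add_card_parityClass_le h.symm
  have hcard := hG.card_parityClass_add_card_parityClass h
  rcases hG.transmission_eq_add_one_or h with h' | h' <;> omega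

lemma tight_of_two_mul_transmission_eq {u v : V} (h : G.Adj v u)
    (heq : 2 * transmission G v = 3 * Fintype.card V - 5) :
    transmission G v + 2 = Fintype.card V + #(parityClass G v) ∧
      transmission G u + 2 = Fintype.card V + #(parityClass G u) ∧
      2 * #(parityClass G v) + 1 = Fintype.card V := by
  have hv := hG.card_add_card_parityClass_le h
  have hu := hG.card_add_card_parityClass_le h.symm
  have hcard := hG.card_parityClass_add_card_parityClass h
  have hpos_v : 0 < #(parityClass G v) := card_pos.mpr ⟨v, self_mem_parityClass v⟩
  have hpos_u : 0 < #(parityClass G u) := card_pos.mpr ⟨u, self_mem_parityClass u⟩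
  rcases hG.transmission_eq_add_one_or h with h' | h' <;> omega

lemma adj_iff_of_two_mul_transmission_eq {u v : V} (h : G.Adj v u)
    (heq : 2 * transmission G v = 3 * Fintype.card V - 5) (x y : V) :
    G.Adj x y ↔ (x ∈ parityClass G v ↔ y ∉ parityClass G v) := by
  classical
  have htight_v := (hG.tight_of_two_mul_transmission_eq h heq).1
  have hcross : ∀ x ∈ parityClass G v, ∀ y ∉ parityClass G v, G.Adj x y := by
    intro x hx y hy
    have hvy := hG.adj_of_notMem_parityClass htight_v hy
    have htight_y := (hG.tight_of_two_mul_transmission_eq hvy heq).2.1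
    refine (hG.adj_of_notMem_parityClass htight_y ?_).symm
    rwa [hG.parityClass_eq_compl_of_adj hvy, notMem_compl]
  refine ⟨fun hxy ↦ ?_, fun hxy ↦ ?_⟩
  · simp only [mem_parityClass]
    rcases hG.transmission_eq_add_one_or hxy with h' | h' <;> omega
  · by_cases hx : x ∈ parityClass G v
    · exact hcross x hx y (hxy.mp hx)
    · exact (hcross y (not_not.mp (mt hxy.mpr hx)) x hx).symm

end IsSTI

end STI

theorem sti_min_transmission [Fintype V] (G : SimpleGraph V)
    (hSTI : IsSTI G) (hn : 5 ≤ Fintype.card V) :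
    (∀ v : V, 3 * Fintype.card V - 5 ≤ 2 * transmission G v) ∧
    ((∃ v : V, 2 * transmission G v = 3 * Fintype.card V - 5) ↔
      Nonempty (G ≃g completeBipartiteGraph (Fin ((Fintype.card V - 1) / 2)) (Fin ((Fintype.card V + 1) / 2)))) := by
  have : Nontrivial V := Fintype.one_lt_card_iff_nontrivial.mp (by omega)
  have hneighbour := hSTI.1.preconnected.exists_adj_of_nontrivial
  refine ⟨fun v ↦ ?_, ⟨fun ⟨v, hv⟩ ↦ ?_, fun ⟨e⟩ ↦ ?_⟩⟩
  · obtain ⟨u, h⟩ := hneighbour v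
    have := hSTI.three_mul_card_le h
    omega
  · obtain ⟨u, h⟩ := hneighbour v
    have hcard := (hSTI.tight_of_two_mul_transmission_eq h hv).2.2
    exact nonempty_iso_completeBipartiteGraph_of_adj_iff _
      (hSTI.adj_iff_of_two_mul_transmission_eq h hv) (by omega) (by omega)
  · -- the part sizes add up to `Fintype.card V` only when it is odd
    have hcard : Fintype.card V = (Fintype.card V - 1) / 2 + (Fintype.card V + 1) / 2 := by
      simpa using Fintype.card_congr e.toEquiv
    have : Nonempty (Fin ((Fintype.card V + 1) / 2)) := ⟨⟨0, by omega⟩⟩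
    refine ⟨e.symm (.inl ⟨0, by omega⟩), ?_⟩
    rw [← transmission_iso e, RelIso.apply_symm_apply, transmission_completeBipartiteGraph_inl]
    simp only [Fintype.card_fin]
    omega
end

section
/- For every odd integer n ≥ 5, the hatted cycle G_n is a stepwise transmission irregular (STI) graph. -/
/-!
Write `n = 2k + 1` and index the apex by `2k`. The apex is joined to `0` and `2`, which are
already at distance 2 on the even cycle `0, …, 2k - 1`, so it shortcuts nothing: cycle vertices
keep their cycle distance, and the apex is at distance `1 + δ(v)` from a cycle vertex `v`, where
`δ` is the distance to `{0, 2}`. Summing, every vertex `v` (the apex included, with `δ = 1`) has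
transmission `k² + 1 + δ(v)`. Since `n` is odd the graph is bipartite with `0` and `2` on the same
side, so `δ` changes by exactly one along every edge.
-/

open Finset

variable {V : Type*}

/-- The hatted cycle `G_n` on vertices `0, …, n-1` (paper's `v_1, …, v_n`):
vertices `0, …, n-2` induce a cycle of length `n-1`, and vertex `n-1`
is adjacent exactly to vertices `0` and `2`. -/
def hattedCycle (n : ℕ) : SimpleGraph (Fin n) :=
  SimpleGraph.fromRel (fun i j =>
    (j.val = i.val + 1 ∧ j.val ≤ n - 2) ∨
    (i.val = 0 ∧ j.val = n - 2) ∨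
    (i.val = n - 1 ∧ (j.val = 0 ∨ j.val = 2)))

namespace SimpleGraph

variable {G : SimpleGraph V} {d : V → V → ℕ}

theorem Walk.le_length_of_forall_adj_le (hself : ∀ v, d v v = 0)
    (hadj : ∀ u v w, G.Adj u v → d u w ≤ d v w + 1) {u w : V} (p : G.Walk u w) :
    d u w ≤ p.length := by
  induction p with
  | nil => simp [hself]
  | @cons u v w h _ ih => have := hadj u v w h; simp only [length_cons]; omega

theorem reachable_and_dist_le_of_descent
    (hdesc : ∀ u w, u ≠ w → ∃ v, G.Adj u v ∧ d v w < d u w) (u w : V) :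
    G.Reachable u w ∧ G.dist u w ≤ d u w := by
  induction hN : d u w using Nat.strong_induction_on generalizing u with
  | _ N ih =>
  by_cases huw : u = w
  · subst huw; simp
  obtain ⟨v, huv, hlt⟩ := hdesc u w huw
  obtain ⟨hvw, hdist⟩ := ih _ (hN ▸ hlt) v rfl
  refine ⟨huv.reachable.trans hvw, ?_⟩
  obtain ⟨p, hp⟩ := hvw.exists_walk_length_eq_dist
  have := dist_le (Walk.cons huv p)
  simp only [Walk.length_cons] at this
  omega

theorem dist_eq_of_descent (hself : ∀ v, d v v = 0)
    (hadj : ∀ u v w, G.Adj u v → d u w ≤ d v w + 1)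
    (hdesc : ∀ u w, u ≠ w → ∃ v, G.Adj u v ∧ d v w < d u w) (u w : V) :
    G.dist u w = d u w := by
  obtain ⟨hr, hle⟩ := reachable_and_dist_le_of_descent hdesc u w
  obtain ⟨p, hp⟩ := hr.exists_walk_length_eq_dist
  exact le_antisymm hle (hp ▸ p.le_length_of_forall_adj_le hself hadj)

theorem connected_of_descent [Nonempty V]
    (hdesc : ∀ u w, u ≠ w → ∃ v, G.Adj u v ∧ d v w < d u w) : G.Connected :=
  (connected_iff G).2 ⟨fun u w => (reachable_and_dist_le_of_descent hdesc u w).1, ‹_›⟩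

end SimpleGraph

theorem sum_range_min_sub_two_mul (m : ℕ) :
    ∑ j ∈ range (2 * m), min j (2 * m - j) = m * m := by
  induction m with
  | zero => simp
  | succ m ih =>
    have shift : ∀ j ∈ range (2 * m + 1),
        min (j + 1) (2 * m + 1 + 1 - (j + 1)) = min j (2 * m - j) + 1 := by
      intro j hj; rw [mem_range] at hj; omega
    rw [show 2 * (m + 1) = 2 * m + 1 + 1 by ring, sum_range_succ', sum_congr rfl shift,
      sum_add_distrib, sum_range_succ, ih]
    simp only [sum_const, card_range, smul_eq_mul, Nat.sub_self, _root_.min_zero, zero_min]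
    ring

theorem hattedCycle_adj_iff {k : ℕ} {x y : Fin (2 * k + 1)} :
    (hattedCycle (2 * k + 1)).Adj x y ↔ x.val ≠ y.val ∧
      ((y.val = x.val + 1 ∧ y.val ≤ 2 * k - 1) ∨ (x.val = 0 ∧ y.val = 2 * k - 1) ∨
        (x.val = 2 * k ∧ (y.val = 0 ∨ y.val = 2)) ∨
       (x.val = y.val + 1 ∧ x.val ≤ 2 * k - 1) ∨ (y.val = 0 ∧ x.val = 2 * k - 1) ∨
        (y.val = 2 * k ∧ (x.val = 0 ∨ x.val = 2))) := by
  simp only [hattedCycle, SimpleGraph.fromRel_adj, ne_eq, Fin.ext_iff]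
  omega

namespace HattedCycle

variable (k : ℕ)

def cycleDist (a b : ℕ) : ℕ := min (a - b + (b - a)) (2 * k - (a - b + (b - a)))

/-- The distance from vertex `a` to `{0, 2}`, the apex being `2 * k`. -/
def baseDist (a : ℕ) : ℕ :=
  if a ≤ 1 then a else if a = 2 * k then 1 else min (a - 2) (2 * k - a)

def hatDist (a b : ℕ) : ℕ :=
  if a = 2 * k then (if b = 2 * k then 0 else 1 + baseDist k b)
  else if b = 2 * k then 1 + baseDist k a
  else cycleDist k a b

def cycleSucc (a : ℕ) : ℕ := if a + 1 = 2 * k then 0 else a + 1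

def cyclePred (a : ℕ) : ℕ := if a = 0 then 2 * k - 1 else a - 1

def stepToward (a c : ℕ) : ℕ :=
  if a = 2 * k then (if 2 ≤ c ∧ c ≤ k + 1 then 2 else 0)
  else if c = 2 * k then
    (if a = 0 ∨ a = 2 then 2 * k else if a ≤ k + 1 then a - 1 else cycleSucc k a)
  else if a < c ∧ c ≤ a + k ∨ c + k ≤ a then cycleSucc k a else cyclePred k a

variable {k}

theorem hatDist_le_of_adj {x y : Fin (2 * k + 1)}
    (h : (hattedCycle (2 * k + 1)).Adj x y) (w : Fin (2 * k + 1)) :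
    hatDist k x w ≤ hatDist k y w + 1 := by
  have := w.isLt
  rw [hattedCycle_adj_iff] at h
  simp only [hatDist, cycleDist, baseDist]
  split_ifs <;> omega

theorem stepToward_lt {a c : ℕ} (ha : a < 2 * k + 1) :
    stepToward k a c < 2 * k + 1 := by
  simp only [stepToward, cycleSucc, cyclePred]
  split_ifs <;> omega

theorem adj_stepToward (hk : 2 ≤ k) (x w : Fin (2 * k + 1)) :
    (hattedCycle (2 * k + 1)).Adj x ⟨stepToward k x w, stepToward_lt x.isLt⟩ := by
  have := w.isLt
  rw [hattedCycle_adj_iff]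
  simp only [stepToward, cycleSucc, cyclePred]
  split_ifs <;> omega

theorem hatDist_stepToward_lt {a c : ℕ} (ha : a < 2 * k + 1) (hc : c < 2 * k + 1)
    (hac : a ≠ c) : hatDist k (stepToward k a c) c < hatDist k a c := by
  simp only [hatDist, cycleDist, baseDist, stepToward, cycleSucc, cyclePred]
  split_ifs <;> omega

theorem hatDist_self (a : ℕ) : hatDist k a a = 0 := by
  simp only [hatDist, cycleDist]
  split_ifs <;> omega

theorem exists_adj_hatDist_lt (hk : 2 ≤ k) (x w : Fin (2 * k + 1)) (hxw : x ≠ w) :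
    ∃ y, (hattedCycle (2 * k + 1)).Adj x y ∧ hatDist k y w < hatDist k x w :=
  ⟨_, adj_stepToward hk x w, hatDist_stepToward_lt x.isLt w.isLt (Fin.val_ne_of_ne hxw)⟩

theorem sum_cycleDist_succ {v : ℕ} (hv : v + 1 < 2 * k) :
    ∑ j ∈ range (2 * k), cycleDist k (v + 1) j = ∑ j ∈ range (2 * k), cycleDist k v j := by
  obtain ⟨m, hm⟩ : ∃ m, 2 * k = m + 1 := ⟨2 * k - 1, by omega⟩
  rw [hm, sum_range_succ', sum_range_succ]
  congr 1
  · refine sum_congr rfl fun j hj => ?_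
    rw [mem_range] at hj
    simp only [cycleDist]
    omega
  · simp only [cycleDist]
    omega

theorem sum_cycleDist {v : ℕ} (hv : v < 2 * k) :
    ∑ j ∈ range (2 * k), cycleDist k v j = k * k := by
  induction v with
  | zero =>
    rw [← sum_range_min_sub_two_mul k]
    exact sum_congr rfl fun j _ => by simp only [cycleDist]; omega
  | succ v ih => rw [sum_cycleDist_succ hv, ih (by omega)]

theorem sum_baseDist (hk : 0 < k) :
    ∑ j ∈ range (2 * k), baseDist k j = (k - 1) * (k - 1) + 1 := by
  obtain ⟨m, rfl⟩ : ∃ m, k = m + 1 := ⟨k - 1, by omega⟩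
  have shift : ∀ j ∈ range (2 * m), baseDist (m + 1) (j + 1 + 1) = min j (2 * m - j) := by
    intro j hj
    rw [mem_range] at hj
    simp only [baseDist]
    split_ifs <;> omega
  rw [show 2 * (m + 1) = 2 * m + 1 + 1 by ring, sum_range_succ', sum_range_succ',
    sum_congr rfl shift, sum_range_min_sub_two_mul]
  simp [baseDist]

theorem baseDist_apex (hk : 0 < k) : baseDist k (2 * k) = 1 := by
  rw [baseDist, if_neg (by omega), if_pos rfl]

theorem sum_hatDist (hk : 0 < k) {a : ℕ} (ha : a < 2 * k + 1) :
    ∑ j ∈ range (2 * k + 1), hatDist k a j = k * k + 1 + baseDist k a := by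
  rw [sum_range_succ]
  by_cases hapex : a = 2 * k
  · subst hapex
    have : ∀ j ∈ range (2 * k), hatDist k (2 * k) j = 1 + baseDist k j := by
      intro j hj; rw [mem_range] at hj; rw [hatDist, if_pos rfl, if_neg (by omega)]
    rw [sum_congr rfl this, sum_add_distrib, sum_baseDist hk, hatDist_self, baseDist_apex hk]
    obtain ⟨m, rfl⟩ : ∃ m, k = m + 1 := ⟨k - 1, by omega⟩
    simp only [sum_const, card_range, smul_eq_mul, Nat.add_sub_cancel]
    ring
  · have : ∀ j ∈ range (2 * k), hatDist k a j = cycleDist k a j := by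
      intro j hj; rw [mem_range] at hj; rw [hatDist, if_neg hapex, if_neg (by omega)]
    rw [sum_congr rfl this, sum_cycleDist (by omega), hatDist, if_neg hapex, if_pos rfl]
    ring

theorem baseDist_adj {x y : Fin (2 * k + 1)} (h : (hattedCycle (2 * k + 1)).Adj x y) :
    baseDist k x + 1 = baseDist k y ∨ baseDist k y + 1 = baseDist k x := by
  rw [hattedCycle_adj_iff] at h
  simp only [baseDist]
  split_ifs <;> omega

end HattedCycle

open HattedCycle

theorem hattedCycle_dist {k : ℕ} (hk : 2 ≤ k) (x w : Fin (2 * k + 1)) :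
    (hattedCycle (2 * k + 1)).dist x w = hatDist k x w :=
  SimpleGraph.dist_eq_of_descent (d := fun x w : Fin (2 * k + 1) => hatDist k x w)
    (fun _ => hatDist_self _)
    (fun _ _ w h => hatDist_le_of_adj h w) (exists_adj_hatDist_lt hk) x w

theorem hattedCycle_connected {k : ℕ} (hk : 2 ≤ k) : (hattedCycle (2 * k + 1)).Connected :=
  SimpleGraph.connected_of_descent (exists_adj_hatDist_lt hk)

theorem transmission_hattedCycle {k : ℕ} (hk : 2 ≤ k) (x : Fin (2 * k + 1)) :
    transmission (hattedCycle (2 * k + 1)) x = k * k + 1 + baseDist k x := by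
  simp only [transmission, hattedCycle_dist hk]
  rw [Fin.sum_univ_eq_sum_range (hatDist k x), sum_hatDist (by omega) x.isLt]

theorem hattedCycle_isSTI (n : ℕ) (hn : 5 ≤ n) (hodd : Odd n) :
    IsSTI (hattedCycle n) := by
  obtain ⟨k, rfl⟩ := hodd
  have hk : 2 ≤ k := by omega
  refine ⟨hattedCycle_connected hk, fun x y hxy => ?_⟩
  rw [transmission_hattedCycle hk, transmission_hattedCycle hk]
  rcases baseDist_adj hxy with h | h <;> omega
end

section
/- For every odd integer n ≥ 3, the balanced complete bipartite graph K_{(n−1)/2,(n+1)/2} is a stepwise transmission irregular (STI) graph. -/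
/-!
If a vertex `v` has eccentricity at most `2`, every other vertex is at distance `1` or `2`
from it, so `Tr(v) = 2 (|V| - 1) - deg v`. In `K_{a,b}` every vertex has eccentricity at most
`2` and the two ends of an edge have degrees `b` and `a`, so their transmissions differ by
`|a - b|`, which is `1` for the parts of sizes `(n - 1) / 2` and `(n + 1) / 2`.
-/

open Finset

variable {V : Type*}

namespace SimpleGraph

lemma reachable_of_edist_le_two {G : SimpleGraph V} {u v : V} (h : G.edist u v ≤ 2) :
    G.Reachable u v :=
  edist_ne_top_iff_reachable.mp (ne_top_of_le_ne_top (by simp) h)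

lemma dist_eq_two_of_edist_le_two {G : SimpleGraph V} {u v : V} (h : G.edist u v ≤ 2)
    (hne : u ≠ v) (hadj : ¬G.Adj u v) : G.dist u v = 2 := by
  have hreach : G.Reachable u v := reachable_of_edist_le_two h
  have hle : G.dist u v ≤ 2 := by exact_mod_cast hreach.coe_dist_eq_edist ▸ h
  have h0 : G.dist u v ≠ 0 := (hreach.pos_dist_of_ne hne).ne'
  have h1 : G.dist u v ≠ 1 := mt dist_eq_one_iff_adj.mp hadj
  omega

theorem transmission_add_degree_add_two [Fintype V] {G : SimpleGraph V} [DecidableRel G.Adj]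
    {v : V} (hv : G.eccent v ≤ 2) :
    transmission G v + G.degree v + 2 = 2 * Fintype.card V := by
  classical
  have hsplit : ∀ u, G.dist v u + (if G.Adj v u then 1 else 0) + (if v = u then 2 else 0) = 2 := by
    intro u
    by_cases huv : v = u
    · subst huv; simp
    by_cases hadj : G.Adj v u
    · simp [hadj, huv, dist_eq_one_iff_adj.mpr hadj]
    · simp [hadj, huv, dist_eq_two_of_edist_le_two ((edist_le_eccent).trans hv) huv hadj]
  have := Finset.sum_congr rfl (fun u (_ : u ∈ univ) => hsplit u)
  simpa [sum_add_distrib, transmission, sum_boole, ← card_neighborFinset_eq_degree,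
    neighborFinset_eq_filter, mul_comm] using this

variable {α β : Type*}

lemma completeBipartiteGraph_edist_le_two [Nonempty α] [Nonempty β] (u w : α ⊕ β) :
    (completeBipartiteGraph α β).edist u w ≤ 2 := by
  obtain ⟨a⟩ := ‹Nonempty α›
  obtain ⟨b⟩ := ‹Nonempty β›
  have path2 {x y z : α ⊕ β} (hxy : (completeBipartiteGraph α β).Adj x y)
      (hyz : (completeBipartiteGraph α β).Adj y z) : (completeBipartiteGraph α β).edist x z ≤ 2 :=
    (Walk.cons hxy (Walk.cons hyz .nil)).edist_le
  rcases u with a₁ | b₁ <;> rcases w with a₂ | b₂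
  · exact path2 (y := .inr b) (by simp) (by simp)
  · exact (edist_eq_one_iff_adj.mpr (by simp)).trans_le one_le_two
  · exact (edist_eq_one_iff_adj.mpr (by simp)).trans_le one_le_two
  · exact path2 (y := .inl a) (by simp) (by simp)

lemma completeBipartiteGraph_degree_inl [Fintype α] [Fintype β]
    [DecidableRel (completeBipartiteGraph α β).Adj] (a : α) :
    (completeBipartiteGraph α β).degree (.inl a) = Fintype.card β := by
  rw [← card_neighborFinset_eq_degree, neighborFinset_eq_filter, card_filter,
    Fintype.sum_sum_type]
  simp

lemma completeBipartiteGraph_degree_inr [Fintype α] [Fintype β]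
    [DecidableRel (completeBipartiteGraph α β).Adj] (b : β) :
    (completeBipartiteGraph α β).degree (.inr b) = Fintype.card α := by
  rw [← card_neighborFinset_eq_degree, neighborFinset_eq_filter, card_filter,
    Fintype.sum_sum_type]
  simp

lemma completeBipartiteGraph_connected [Nonempty α] [Nonempty β] :
    (completeBipartiteGraph α β).Connected where
  preconnected u w := reachable_of_edist_le_two (completeBipartiteGraph_edist_le_two u w)

end SimpleGraph

open SimpleGraph

theorem isSTI_completeBipartiteGraph {α β : Type*} [Fintype α] [Fintype β] [Nonempty α]
    [Nonempty β] (h : ((Fintype.card α : ℤ) - Fintype.card β).natAbs = 1) :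
    IsSTI (completeBipartiteGraph α β) := by
  classical
  have hecc (u : α ⊕ β) : (completeBipartiteGraph α β).eccent u ≤ 2 :=
    (eccent_le_iff _ _).mpr (completeBipartiteGraph_edist_le_two u)
  have hl (a : α) := transmission_add_degree_add_two (hecc (.inl a))
  have hr (b : β) := transmission_add_degree_add_two (hecc (.inr b))
  simp only [completeBipartiteGraph_degree_inl, completeBipartiteGraph_degree_inr,
    Fintype.card_sum] at hl hr
  refine ⟨completeBipartiteGraph_connected, ?_⟩
  rintro (a | b) (a' | b') hadj
  · simp at hadj
  · have := hl a; have := hr b'; omega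
  · have := hl a'; have := hr b; omega
  · simp at hadj

theorem completeBipartite_isSTI (n : ℕ) (hn : 3 ≤ n) (hodd : Odd n) :
    IsSTI (completeBipartiteGraph (Fin ((n - 1) / 2)) (Fin ((n + 1) / 2))) := by
  obtain ⟨m, rfl⟩ := hodd
  have : Nonempty (Fin ((2 * m + 1 - 1) / 2)) := ⟨⟨0, by omega⟩⟩
  have : Nonempty (Fin ((2 * m + 1 + 1) / 2)) := ⟨⟨0, by omega⟩⟩
  exact isSTI_completeBipartiteGraph (by simp only [Fintype.card_fin]; omega)
end

section
/- If G is a 2-connected graph of odd order n, then every vertex v of G satisfies Tr_G(v) ≤ (n² − 1)/4. -/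
open Finset

variable {V : Type*}

/-- A graph is 2-connected if it has at least 3 vertices and deleting any single
vertex leaves a connected graph. -/
def TwoConnected [Fintype V] (G : SimpleGraph V) : Prop :=
  3 ≤ Fintype.card V ∧ ∀ v : V, (G.induce ({v}ᶜ : Set V)).Connected

/-! Let `e` be the eccentricity of `v`. Every distance level `1, …, e - 1` holds at least two
vertices, since one vertex alone would separate `v` from the vertices farther out. Writing the
transmission as `∑_{k < e} #{u | k < d(v, u)}`, the `k`-th term is at most `n - (2k + 1)`, so
`Tr(v) ≤ e n - e² = (n² - (n - 2e)²) / 4`, and `n - 2e ≠ 0` because `n` is odd. -/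

theorem Finset.sum_eq_sum_range_card_lt {ι : Type*} (s : Finset ι) (f : ι → ℕ) {m : ℕ}
    (hf : ∀ i ∈ s, f i ≤ m) : ∑ i ∈ s, f i = ∑ k ∈ range m, #{i ∈ s | k < f i} := by
  simp only [card_filter]
  rw [sum_comm]
  refine sum_congr rfl fun i hi => ?_
  have hfi := hf i hi
  rw [← card_filter]
  convert (card_range (f i)).symm using 2
  ext k
  simp only [mem_filter, mem_range]
  omega

namespace SimpleGraph

theorem Walk.exists_mem_support_dist_eq {G : SimpleGraph V} (r : V) {a b : V} (p : G.Walk a b)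
    {m : ℕ} (ha : G.dist r a ≤ m) (hb : m ≤ G.dist r b) : ∃ x ∈ p.support, G.dist r x = m := by
  induction p with
  | nil => exact ⟨_, start_mem_support _, le_antisymm ha hb⟩
  | @cons a c b hac q ih =>
    rcases ha.eq_or_lt with ha | ha
    · exact ⟨a, start_mem_support _, ha⟩
    · have hc : G.dist r c ≤ G.dist r a + 1 :=
        dist_eq_one_iff_adj.mpr hac ▸ hac.reachable.dist_triangle_right r
      obtain ⟨x, hx, rfl⟩ := ih (by omega) hb
      exact ⟨x, List.mem_cons_of_mem _ hx, rfl⟩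

end SimpleGraph

namespace TwoConnected

open SimpleGraph

variable [Fintype V] {G : SimpleGraph V}

theorem one_lt_card_dist_eq (h2 : TwoConnected G) {v u : V} {k : ℕ} (hk : 0 < k)
    (hku : k < G.dist v u) : 1 < #{x | G.dist v x = k} := by
  obtain ⟨p, -⟩ := (dist_ne_zero_iff_ne_and_reachable.mp (by omega : G.dist v u ≠ 0)).2
    |>.exists_walk_length_eq_dist
  obtain ⟨w, -, hw⟩ := p.exists_mem_support_dist_eq v (by simp) hku.le
  have hvw : v ≠ w := by rintro rfl; simp at hw; omega
  have huw : u ≠ w := by rintro rfl; omega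
  obtain ⟨q⟩ := (h2.2 w).preconnected ⟨v, hvw⟩ ⟨u, huw⟩
  obtain ⟨x, hx, hxk⟩ := (q.map (Embedding.induce _).toHom).exists_mem_support_dist_eq v
    (by simp) (by simpa using hku.le)
  have hxw : x ≠ w := by
    simp only [Walk.support_map, List.mem_map] at hx
    obtain ⟨y, -, rfl⟩ := hx
    exact y.2
  exact one_lt_card.mpr ⟨x, by simpa using hxk, w, by simpa using hw, hxw⟩

theorem card_dist_gt_add_le (h2 : TwoConnected G) {v w : V} {k : ℕ}
    (hk : k < G.dist v w) : #{u | k < G.dist v u} + (2 * k + 1) ≤ Fintype.card V := by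
  induction k with
  | zero =>
    have : #{u | 0 < G.dist v u} < #(univ : Finset V) :=
      card_lt_card (filter_ssubset.mpr ⟨v, mem_univ v, by simp⟩)
    simpa using this
  | succ k ih =>
    have hlevel := h2.one_lt_card_dist_eq (by omega : 0 < k + 1) hk
    have hsplit :
        #{u | k + 1 < G.dist v u} + #{u | G.dist v u = k + 1} ≤ #{u | k < G.dist v u} := by
      classical
      rw [← card_union_of_disjoint (disjoint_filter.mpr fun u _ h => by omega)]
      exact card_le_card fun u => by simp only [mem_union, mem_filter, mem_univ, true_and]; omega
    have := ih (by omega)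
    omega

theorem transmission_add_mul_le (h2 : TwoConnected G) (v : V) :
    transmission G v + univ.sup (G.dist v) * univ.sup (G.dist v) ≤
      univ.sup (G.dist v) * Fintype.card V := by
  obtain ⟨w, -, hw⟩ := exists_mem_eq_sup univ ⟨v, mem_univ v⟩ (G.dist v)
  set e := univ.sup (G.dist v)
  have hsum : ∀ m ≤ e, ∑ k ∈ range m, #{u | k < G.dist v u} + m * m ≤ m * Fintype.card V := by
    intro m
    induction m with
    | zero => simp
    | succ m ih =>
      intro hm
      have := h2.card_dist_gt_add_le (v := v) (w := w) (k := m) (by omega)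
      rw [sum_range_succ]
      nlinarith [ih (by omega)]
  rw [transmission, sum_eq_sum_range_card_lt univ (G.dist v) fun u _ => le_sup (mem_univ u)]
  exact hsum e le_rfl

end TwoConnected

theorem Nat.four_mul_le_sq_sub_one_of_odd {t e n : ℕ} (h : t + e * e ≤ e * n) (hn : Odd n) :
    4 * t ≤ n ^ 2 - 1 := by
  obtain ⟨m, rfl⟩ := hn
  have : (1 : ℤ) ≤ (2 * m + 1 - 2 * e) ^ 2 := by
    rw [one_le_sq_iff_one_le_abs]
    exact Int.one_le_abs (by omega)
  apply Nat.le_sub_one_of_lt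
  zify at h ⊢
  nlinarith

theorem transmission_le_of_twoConnected_odd [Fintype V] (G : SimpleGraph V)
    (h2 : TwoConnected G) (hodd : Odd (Fintype.card V)) (v : V) :
    4 * transmission G v ≤ Fintype.card V ^ 2 - 1 :=
  Nat.four_mul_le_sq_sub_one_of_odd (h2.transmission_add_mul_le v) hodd
end
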